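/- arXiv:1203.5457 — 2 statements merged into one kernel-verified Lean document; each statement's English description precedes it below -/
import Mathlib

section
/- Let M and N be non-crossing partial matchings of [n]. If the matched set of M differs from the matched set of N, then ⟨v_M, v_N⟩ = 0. If M and N have the same matched set S, then ⟨v_M, v_N⟩ = (−1)^{c(M,N)}. In particular ⟨v_M, v_N⟩ = ±1 whenever M and N have the same matched set. (This is the paper's lemma that the inner product of two dotted basis diagrams is ±1 if they are equivalent and 0 otherwise.) -/
open Finset LaurentPolynomial

/-- The Laurent polynomial ring `ℤ[q, q⁻¹]`. -/
abbrev R : Type := LaurentPolynomial ℤ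

/-- `M` is a non-crossing partial matching of the `n` points `0, …, n-1`,
taken in circular order on the boundary of a disk: a set of chords `(a, b)` with `a < b`
(each recording the two-element subset `{a, b}`), pairwise disjoint, and with no two chords
`{a, b}`, `{c, d}` satisfying `a < c < b < d`. -/
def IsNCPM (n : ℕ) (M : Finset (Fin n × Fin n)) : Prop :=
  (∀ p ∈ M, p.1 < p.2) ∧
    (∀ p ∈ M, ∀ q ∈ M, p ≠ q → p.1 ≠ q.1 ∧ p.1 ≠ q.2 ∧ p.2 ≠ q.1 ∧ p.2 ≠ q.2) ∧
    (∀ p ∈ M, ∀ q ∈ M, ¬(p.1 < q.1 ∧ q.1 < p.2 ∧ p.2 < q.2))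

instance (n : ℕ) : DecidablePred (IsNCPM n) := fun M =>
  have h1 : Decidable (∀ p ∈ M, p.1 < p.2) := inferInstance
  have h2 : Decidable
      (∀ p ∈ M, ∀ q ∈ M, p ≠ q → p.1 ≠ q.1 ∧ p.1 ≠ q.2 ∧ p.2 ≠ q.1 ∧ p.2 ≠ q.2) :=
    inferInstance
  have h3 : Decidable (∀ p ∈ M, ∀ q ∈ M, ¬(p.1 < q.1 ∧ q.1 < p.2 ∧ p.2 < q.2)) :=
    inferInstance
  @instDecidableAnd _ _ h1 (@instDecidableAnd _ _ h2 h3)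

/-- The type of non-crossing partial matchings of `[n]`. -/
abbrev NCPM (n : ℕ) : Type := {M : Finset (Fin n × Fin n) // IsNCPM n M}

/-- `Pn n`: the free `ℤ[q,q⁻¹]`-module on the non-crossing partial matchings of `[n]`,
modeling the planar-algebra space of crossingless diagrams in a disk with `n` boundary
points. -/
abbrev Pn (n : ℕ) : Type := NCPM n →₀ R

/-- `e M`: the basis diagram of `Pn n` corresponding to the matching `M`. -/
noncomputable def e {n : ℕ} (M : NCPM n) : Pn n := Finsupp.single M 1

theorem IsNCPM.subset {n : ℕ} {M A : Finset (Fin n × Fin n)} (hM : IsNCPM n M) (h : A ⊆ M) :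
    IsNCPM n A :=
  ⟨fun p hp => hM.1 p (h hp), fun p hp q hq hpq => hM.2.1 p (h hp) q (h hq) hpq,
    fun p hp q hq => hM.2.2 p (h hp) q (h hq)⟩

/-- The dotted element `v_M := ∑_{N ⊆ M} (−1)^{|M|−|N|} e_N`, the sum over all subsets `N`
of the set of chords of `M`. -/
noncomputable def dotted {n : ℕ} (M : NCPM n) : Pn n :=
  ∑ A ∈ M.1.powerset.attach,
    ((-1 : R) ^ (M.1.card - A.1.card)) • e ⟨A.1, M.2.subset (Finset.mem_powerset.mp A.2)⟩

/-- The matched set of a set of chords: the union of its chords. -/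
def matchedSet {V : Type*} [DecidableEq V] (E : Finset (V × V)) : Finset V :=
  E.biUnion fun p => {p.1, p.2}

/-- The multigraph on `[n]` whose edges are the chords of `M` together with the chords of `N`
(a chord occurring in both counting as a double edge, forming a 2-cycle) contains a cycle.
For `M`, `N` partial matchings this happens exactly when some nonempty `A ⊆ M` and
nonempty `B ⊆ N` have the same matched set. -/
def HasCycle {n : ℕ} (M N : Finset (Fin n × Fin n)) : Prop :=
  ∃ A ⊆ M, A.Nonempty ∧ ∃ B ⊆ N, B.Nonempty ∧ matchedSet A = matchedSet B

instance {n : ℕ} (M N : Finset (Fin n × Fin n)) : Decidable (HasCycle M N) := by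
  unfold HasCycle; infer_instance

/-- The bilinear form on `Pn n` with `⟨e_M, e_N⟩ = 1` if gluing `M` to the mirror image of
`N` produces no closed loop, and `⟨e_M, e_N⟩ = 0` otherwise. -/
noncomputable def pairing {n : ℕ} (x y : Pn n) : R :=
  ∑ M ∈ x.support, ∑ N ∈ y.support, x M * y N * (if HasCycle M.1 N.1 then 0 else 1)

open scoped Classical in
/-- `cyclesCount M N`: the number of cycles of the multigraph whose edges are the chords of
`M` together with the chords of `N`.  Each cycle corresponds to a minimal nonempty set
`A ⊆ M` whose matched set is also the matched set of some `B ⊆ N`, and we count these. -/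
noncomputable def cyclesCount {n : ℕ} (M N : Finset (Fin n × Fin n)) : ℕ :=
  (M.powerset.filter fun A =>
      A.Nonempty ∧ (∃ B ⊆ N, matchedSet A = matchedSet B) ∧
        ∀ A' ⊂ A, A'.Nonempty → ¬∃ B ⊆ N, matchedSet A' = matchedSet B).card

section Aux
variable {n : ℕ}

/-- `E` is a partial matching: endpoints of each chord distinct, chords pairwise disjoint. -/
def Matching (E : Finset (Fin n × Fin n)) : Prop :=
  (∀ p ∈ E, p.1 ≠ p.2) ∧
    ∀ p ∈ E, ∀ q ∈ E, p ≠ q → p.1 ≠ q.1 ∧ p.1 ≠ q.2 ∧ p.2 ≠ q.1 ∧ p.2 ≠ q.2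

theorem IsNCPM.matching {M : Finset (Fin n × Fin n)} (h : IsNCPM n M) : Matching M :=
  ⟨fun p hp => (h.1 p hp).ne, h.2.1⟩

theorem Matching.subset {E A : Finset (Fin n × Fin n)} (hE : Matching E) (h : A ⊆ E) :
    Matching A :=
  ⟨fun p hp => hE.1 p (h hp), fun p hp q hq hpq => hE.2 p (h hp) q (h hq) hpq⟩

theorem mem_matchedSet {E : Finset (Fin n × Fin n)} {v : Fin n} :
    v ∈ matchedSet E ↔ ∃ p ∈ E, v = p.1 ∨ v = p.2 := by
  simp [matchedSet]

theorem matchedSet_mono {A B : Finset (Fin n × Fin n)} (h : A ⊆ B) :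
    matchedSet A ⊆ matchedSet B := by
  intro v hv
  rw [mem_matchedSet] at hv ⊢
  obtain ⟨p, hp, hvp⟩ := hv
  exact ⟨p, h hp, hvp⟩

theorem Matching.eq_of_shared {E : Finset (Fin n × Fin n)} (hE : Matching E)
    {p q : Fin n × Fin n} {v : Fin n} (hp : p ∈ E) (hq : q ∈ E)
    (hv1 : v = p.1 ∨ v = p.2) (hv2 : v = q.1 ∨ v = q.2) : p = q := by
  by_contra hne
  obtain ⟨h1, h2, h3, h4⟩ := hE.2 p hp q hq hne
  rcases hv1 with h|h <;> rcases hv2 with h'|h' <;> rw [h] at h' <;> tauto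

/-- If two subsets of a matching have nested matched sets, the subsets are nested. -/
theorem Matching.subset_of_matchedSet_subset {E B B' : Finset (Fin n × Fin n)}
    (hE : Matching E) (hB : B ⊆ E) (hB' : B' ⊆ E)
    (h : matchedSet B ⊆ matchedSet B') : B ⊆ B' := by
  intro p hp
  have hv : p.1 ∈ matchedSet B := mem_matchedSet.mpr ⟨p, hp, Or.inl rfl⟩
  obtain ⟨q, hq, hvq⟩ := mem_matchedSet.mp (h hv)
  have : p = q := hE.eq_of_shared (hB hp) (hB' hq) (Or.inl rfl) hvq
  exact this ▸ hq

theorem Matching.eq_of_matchedSet_eq {E B B' : Finset (Fin n × Fin n)}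
    (hE : Matching E) (hB : B ⊆ E) (hB' : B' ⊆ E)
    (h : matchedSet B = matchedSet B') : B = B' :=
  le_antisymm (hE.subset_of_matchedSet_subset hB hB' h.le)
    (hE.subset_of_matchedSet_subset hB' hB h.ge)

theorem Matching.matchedSet_inter {E A A' : Finset (Fin n × Fin n)} (hE : Matching E)
    (hA : A ⊆ E) (hA' : A' ⊆ E) :
    matchedSet (A ∩ A') = matchedSet A ∩ matchedSet A' := by
  apply le_antisymm
  · exact Finset.subset_inter (matchedSet_mono Finset.inter_subset_left)
      (matchedSet_mono Finset.inter_subset_right)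
  · intro v hv
    obtain ⟨hv1, hv2⟩ := Finset.mem_inter.mp hv
    obtain ⟨p, hp, hvp⟩ := mem_matchedSet.mp hv1
    obtain ⟨q, hq, hvq⟩ := mem_matchedSet.mp hv2
    have : p = q := hE.eq_of_shared (hA hp) (hA' hq) hvp hvq
    subst this
    exact mem_matchedSet.mpr ⟨p, Finset.mem_inter.mpr ⟨hp, hq⟩, hvp⟩

theorem Matching.matchedSet_sdiff {E A C : Finset (Fin n × Fin n)} (hE : Matching E)
    (hA : A ⊆ E) (hC : C ⊆ A) :
    matchedSet (A \ C) = matchedSet A \ matchedSet C := by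
  apply le_antisymm
  · intro v hv
    obtain ⟨p, hp, hvp⟩ := mem_matchedSet.mp hv
    obtain ⟨hpA, hpC⟩ := Finset.mem_sdiff.mp hp
    refine Finset.mem_sdiff.mpr ⟨mem_matchedSet.mpr ⟨p, hpA, hvp⟩, fun hvC => ?_⟩
    obtain ⟨q, hq, hvq⟩ := mem_matchedSet.mp hvC
    have : p = q := hE.eq_of_shared (hA hpA) (hA (hC hq)) hvp hvq
    exact hpC (this ▸ hq)
  · intro v hv
    obtain ⟨hv1, hv2⟩ := Finset.mem_sdiff.mp hv
    obtain ⟨p, hp, hvp⟩ := mem_matchedSet.mp hv1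
    refine mem_matchedSet.mpr ⟨p, Finset.mem_sdiff.mpr ⟨hp, fun hpC => ?_⟩, hvp⟩
    exact hv2 (mem_matchedSet.mpr ⟨p, hpC, hvp⟩)

theorem matchedSet_empty : matchedSet (∅ : Finset (Fin n × Fin n)) = ∅ := rfl

theorem matchedSet_nonempty {A : Finset (Fin n × Fin n)} (h : A.Nonempty) :
    (matchedSet A).Nonempty := by
  obtain ⟨p, hp⟩ := h
  exact ⟨p.1, mem_matchedSet.mpr ⟨p, hp, Or.inl rfl⟩⟩

end Aux
section Bal
variable {n : ℕ}

/-- `A` is balanced w.r.t. `N`: its matched set is the matched set of some subset of `N`. -/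
def Bal (N A : Finset (Fin n × Fin n)) : Prop :=
  ∃ B ⊆ N, matchedSet A = matchedSet B

instance (N A : Finset (Fin n × Fin n)) : Decidable (Bal N A) := by
  unfold Bal; infer_instance

/-- The canonical witness for a balanced set. -/
def partner (N A : Finset (Fin n × Fin n)) : Finset (Fin n × Fin n) :=
  N.filter fun p => p.1 ∈ matchedSet A

theorem partner_subset (N A : Finset (Fin n × Fin n)) : partner N A ⊆ N :=
  Finset.filter_subset _ _

theorem partner_eq {N A B : Finset (Fin n × Fin n)} (hN : Matching N) (hB : B ⊆ N)
    (h : matchedSet A = matchedSet B) : partner N A = B := by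
  ext p
  constructor
  · intro hp
    obtain ⟨hpN, hp1⟩ := Finset.mem_filter.mp hp
    rw [h] at hp1
    obtain ⟨q, hq, hvq⟩ := mem_matchedSet.mp hp1
    have : p = q := hN.eq_of_shared hpN (hB hq) (Or.inl rfl) hvq
    exact this ▸ hq
  · intro hp
    refine Finset.mem_filter.mpr ⟨hB hp, ?_⟩
    rw [h]
    exact mem_matchedSet.mpr ⟨p, hp, Or.inl rfl⟩

theorem matchedSet_partner {N A : Finset (Fin n × Fin n)} (hN : Matching N) (h : Bal N A) :
    matchedSet (partner N A) = matchedSet A := by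
  obtain ⟨B, hB, hAB⟩ := h
  rw [partner_eq hN hB hAB, hAB]

theorem Bal.inter {M N A A' : Finset (Fin n × Fin n)} (hM : Matching M) (hN : Matching N)
    (hA : A ⊆ M) (hA' : A' ⊆ M) (h : Bal N A) (h' : Bal N A') : Bal N (A ∩ A') := by
  obtain ⟨B, hB, hAB⟩ := h
  obtain ⟨B', hB', hAB'⟩ := h'
  exact ⟨B ∩ B', (Finset.inter_subset_left).trans hB, by
    rw [hM.matchedSet_inter hA hA', hN.matchedSet_inter hB hB', hAB, hAB']⟩

theorem Bal.sdiff {M N A C : Finset (Fin n × Fin n)} (hM : Matching M) (hN : Matching N)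
    (hA : A ⊆ M) (hC : C ⊆ A) (h : Bal N A) (h' : Bal N C) : Bal N (A \ C) := by
  obtain ⟨B, hB, hAB⟩ := h
  obtain ⟨B', hB', hAB'⟩ := h'
  have hBB' : B' ⊆ B := hN.subset_of_matchedSet_subset hB' hB
    (by rw [← hAB, ← hAB']; exact matchedSet_mono hC)
  exact ⟨B \ B', (Finset.sdiff_subset).trans hB, by
    rw [hM.matchedSet_sdiff hA hC, hN.matchedSet_sdiff hB hBB', hAB, hAB']⟩

/-- The atoms: minimal nonempty balanced subsets of `M`. -/
def atoms (M N : Finset (Fin n × Fin n)) : Finset (Finset (Fin n × Fin n)) :=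
  M.powerset.filter fun A =>
    A.Nonempty ∧ Bal N A ∧ ∀ A' ⊂ A, A'.Nonempty → ¬Bal N A'

theorem mem_atoms {M N A : Finset (Fin n × Fin n)} :
    A ∈ atoms M N ↔ A ⊆ M ∧ A.Nonempty ∧ Bal N A ∧ ∀ A' ⊂ A, A'.Nonempty → ¬Bal N A' := by
  simp [atoms, Finset.mem_filter, and_assoc]

theorem cyclesCount_eq_card_atoms (M N : Finset (Fin n × Fin n)) :
    cyclesCount M N = (atoms M N).card := by
  classical
  unfold cyclesCount atoms Bal
  congr 1

/-- Every nonempty balanced subset of a matching contains an atom. -/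
theorem exists_atom_subset {M N A : Finset (Fin n × Fin n)}
    (hA : A ⊆ M) (hne : A.Nonempty) (hbal : Bal N A) :
    ∃ C ∈ atoms M N, C ⊆ A := by
  induction A using Finset.strongInduction with
  | _ A ih =>
    by_cases hmin : ∀ A' ⊂ A, A'.Nonempty → ¬Bal N A'
    · exact ⟨A, mem_atoms.mpr ⟨hA, hne, hbal, hmin⟩, le_refl A⟩
    · push_neg at hmin
      obtain ⟨A', hA'A, hA'ne, hA'bal⟩ := hmin
      obtain ⟨C, hC, hCA'⟩ := ih A' hA'A (hA'A.subset.trans hA) hA'ne hA'bal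
      exact ⟨C, hC, hCA'.trans hA'A.subset⟩

/-- Distinct atoms are disjoint. -/
theorem atoms_disjoint {M N C C' : Finset (Fin n × Fin n)} (hM : Matching M) (hN : Matching N)
    (hC : C ∈ atoms M N) (hC' : C' ∈ atoms M N) (h : ¬Disjoint C C') : C = C' := by
  obtain ⟨hCM, hCne, hCbal, hCmin⟩ := mem_atoms.mp hC
  obtain ⟨hC'M, hC'ne, hC'bal, hC'min⟩ := mem_atoms.mp hC'
  have hint : (C ∩ C').Nonempty := Finset.not_disjoint_iff_nonempty_inter.mp h
  have hbal : Bal N (C ∩ C') := Bal.inter hM hN hCM hC'M hCbal hC'bal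
  have h1 : C ∩ C' = C := by
    by_contra hne
    exact hCmin (C ∩ C') (lt_of_le_of_ne Finset.inter_subset_left hne) hint hbal
  have h2 : C ∩ C' = C' := by
    by_contra hne
    exact hC'min (C ∩ C') (lt_of_le_of_ne Finset.inter_subset_right hne) hint hbal
  rw [← h1, h2]

/-- Every element of a balanced subset of `M` lies in some atom contained in it. -/
theorem exists_atom_mem {M N A : Finset (Fin n × Fin n)} (hM : Matching M) (hN : Matching N)
    (hA : A ⊆ M) (hbal : Bal N A) {p : Fin n × Fin n} (hp : p ∈ A) :
    ∃ C ∈ atoms M N, C ⊆ A ∧ p ∈ C := by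
  induction A using Finset.strongInduction with
  | _ A ih =>
    obtain ⟨C, hC, hCA⟩ := exists_atom_subset hA ⟨p, hp⟩ hbal
    by_cases hpC : p ∈ C
    · exact ⟨C, hC, hCA, hpC⟩
    · obtain ⟨hCM, hCne, hCbal, _⟩ := mem_atoms.mp hC
      have hlt : A \ C ⊂ A := by
        apply Finset.sdiff_ssubset (by exact_mod_cast hCA) hCne
      obtain ⟨C', hC', hC'sub, hpC'⟩ := ih (A \ C) hlt (Finset.sdiff_subset.trans hA)
        (Bal.sdiff hM hN hA hCA hbal hCbal) (Finset.mem_sdiff.mpr ⟨hp, hpC⟩)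
      exact ⟨C', hC', hC'sub.trans Finset.sdiff_subset, hpC'⟩

end Bal
section Sums

theorem neg_one_pow_sub_R {k a : ℕ} (h : a ≤ k) : (-1 : R) ^ (k - a) = (-1) ^ k * (-1) ^ a := by
  have hk : k + a = (k - a) + 2 * a := by omega
  have : (-1 : R) ^ k * (-1) ^ a = (-1) ^ (k - a) := by
    rw [← pow_add, hk, pow_add, pow_mul]
    norm_num
  rw [this]

theorem sum_powerset_neg_one_R {α : Type*} [DecidableEq α] (K : Finset α) :
    ∑ A ∈ K.powerset, (-1 : R) ^ A.card = if K = ∅ then 1 else 0 := by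
  have h := Finset.sum_powerset_neg_one_pow_card (x := K)
  have : ∑ A ∈ K.powerset, (-1 : R) ^ A.card
      = ((∑ A ∈ K.powerset, (-1 : ℤ) ^ A.card : ℤ) : R) := by
    push_cast
    rfl
  rw [this, h]
  split <;> simp

theorem sum_sandwich {α : Type*} [DecidableEq α] {S L : Finset α} (hL : L ⊆ S) :
    ∑ A ∈ S.powerset, (-1 : R) ^ (S.card - A.card) * (if L ⊆ A then 1 else 0)
      = if L = S then 1 else 0 := by
  have key : ∑ A ∈ S.powerset.filter (fun A => L ⊆ A), (-1 : R) ^ (S.card - A.card)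
      = ∑ A' ∈ (S \ L).powerset, (-1 : R) ^ ((S \ L).card - A'.card) := by
    apply Finset.sum_nbij' (i := fun A => A \ L) (j := fun A' => A' ∪ L)
    · intro A hA
      simp only [Finset.mem_filter, Finset.mem_powerset] at hA
      exact Finset.mem_powerset.mpr (Finset.sdiff_subset_sdiff hA.1 (le_refl L))
    · intro A' hA'
      simp only [Finset.mem_powerset] at hA'
      refine Finset.mem_filter.mpr ⟨Finset.mem_powerset.mpr ?_, Finset.subset_union_right⟩
      exact Finset.union_subset (hA'.trans Finset.sdiff_subset) hL
    · intro A hA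
      simp only [Finset.mem_filter, Finset.mem_powerset] at hA
      exact Finset.sdiff_union_of_subset hA.2
    · intro A' hA'
      simp only [Finset.mem_powerset] at hA'
      apply Finset.union_sdiff_cancel_right
      exact Finset.disjoint_of_subset_left hA' Finset.sdiff_disjoint
    · intro A hA
      simp only [Finset.mem_filter, Finset.mem_powerset] at hA
      congr 1
      have h1 : (S \ L).card = S.card - L.card := Finset.card_sdiff_of_subset hL
      have h2 : (A \ L).card = A.card - L.card := Finset.card_sdiff_of_subset hA.2
      have h3 : L.card ≤ A.card := Finset.card_le_card hA.2
      have h4 : A.card ≤ S.card := Finset.card_le_card hA.1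
      omega
  have step2 : ∑ A' ∈ (S \ L).powerset, (-1 : R) ^ ((S \ L).card - A'.card)
      = (-1 : R) ^ (S \ L).card * ∑ A' ∈ (S \ L).powerset, (-1 : R) ^ A'.card := by
    rw [Finset.mul_sum]
    apply Finset.sum_congr rfl
    intro A' hA'
    exact neg_one_pow_sub_R (Finset.card_le_card (Finset.mem_powerset.mp hA'))
  calc ∑ A ∈ S.powerset, (-1 : R) ^ (S.card - A.card) * (if L ⊆ A then 1 else 0)
      = ∑ A ∈ S.powerset, (if L ⊆ A then (-1 : R) ^ (S.card - A.card) else 0) := by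
        apply Finset.sum_congr rfl; intro A _; rw [mul_ite, mul_one, mul_zero]
    _ = ∑ A ∈ S.powerset.filter (fun A => L ⊆ A), (-1 : R) ^ (S.card - A.card) :=
        (Finset.sum_filter _ _).symm
    _ = (-1 : R) ^ (S \ L).card * ∑ A' ∈ (S \ L).powerset, (-1 : R) ^ A'.card := by
        rw [key, step2]
    _ = if L = S then 1 else 0 := by
        rw [sum_powerset_neg_one_R]
        by_cases h : S \ L = ∅
        · have : L = S := le_antisymm hL (Finset.sdiff_eq_empty_iff_subset.mp h)
          simp [h, this]
        · have : ¬ L = S := fun hLS => h (by rw [hLS, Finset.sdiff_self])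
          simp [h, this]

theorem incl_excl {α : Type*} [DecidableEq α] (𝒜 : Finset (Finset α)) (pred : Finset α → Prop)
    [DecidablePred pred] :
    ∑ T ∈ 𝒜.powerset, (-1 : R) ^ T.card * (if ∀ C ∈ T, pred C then 1 else 0)
      = if ∀ C ∈ 𝒜, ¬pred C then 1 else 0 := by
  set U := 𝒜.filter pred with hU
  have key : ∑ T ∈ 𝒜.powerset, (-1 : R) ^ T.card * (if ∀ C ∈ T, pred C then 1 else 0)
      = ∑ T ∈ U.powerset, (-1 : R) ^ T.card := by
    calc ∑ T ∈ 𝒜.powerset, (-1 : R) ^ T.card * (if ∀ C ∈ T, pred C then 1 else 0)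
        = ∑ T ∈ U.powerset, (-1 : R) ^ T.card * (if ∀ C ∈ T, pred C then 1 else 0) := by
          symm
          apply Finset.sum_subset (Finset.powerset_mono.mpr (Finset.filter_subset pred 𝒜))
          intro T hT hTU
          have : ¬ ∀ C ∈ T, pred C := by
            intro hall
            apply hTU
            refine Finset.mem_powerset.mpr (fun C hC => Finset.mem_filter.mpr
              ⟨Finset.mem_powerset.mp hT hC, hall C hC⟩)
          simp [this]
      _ = ∑ T ∈ U.powerset, (-1 : R) ^ T.card := by
          apply Finset.sum_congr rfl
          intro T hT
          have hTU : ∀ C ∈ T, pred C := fun C hC =>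
            (Finset.mem_filter.mp ((Finset.mem_powerset.mp hT) hC)).2
          rw [if_pos hTU, mul_one]
  rw [key, sum_powerset_neg_one_R]
  congr 1
  simp only [eq_iff_iff]
  rw [hU, Finset.filter_eq_empty_iff]

end Sums
section Reduction
variable {n : ℕ}

theorem dotted_apply (M K : NCPM n) :
    dotted M K = if K.1 ⊆ M.1 then (-1 : R) ^ (M.1.card - K.1.card) else 0 := by
  classical
  unfold dotted
  rw [Finsupp.finset_sum_apply]
  have : ∀ A ∈ M.1.powerset.attach,
      (((-1 : R) ^ (M.1.card - A.1.card)) •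
        e ⟨A.1, M.2.subset (Finset.mem_powerset.mp A.2)⟩) K
      = (if A.1 = K.1 then (-1 : R) ^ (M.1.card - A.1.card) else 0) := by
    intro A _
    rw [Finsupp.smul_apply, e, Finsupp.single_apply]
    by_cases h : A.1 = K.1
    · simp [Subtype.ext_iff, h]
    · simp [Subtype.ext_iff, h]
  rw [Finset.sum_congr rfl this]
  rw [Finset.sum_attach M.1.powerset
    (fun A => if A = K.1 then (-1 : R) ^ (M.1.card - A.card) else 0)]
  rw [Finset.sum_ite_eq' M.1.powerset K.1 (fun A => (-1 : R) ^ (M.1.card - A.card))]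
  simp [Finset.mem_powerset]

theorem pairing_eq_sum_univ (x y : Pn n) :
    pairing x y = ∑ K : NCPM n, ∑ L : NCPM n,
      x K * y L * (if HasCycle K.1 L.1 then 0 else 1) := by
  unfold pairing
  calc ∑ K ∈ x.support, ∑ L ∈ y.support, x K * y L * (if HasCycle K.1 L.1 then 0 else 1)
      = ∑ K ∈ x.support, ∑ L : NCPM n, x K * y L * (if HasCycle K.1 L.1 then 0 else 1) := by
        apply Finset.sum_congr rfl
        intro K _
        apply Finset.sum_subset (Finset.subset_univ _)
        intro L _ hL
        rw [Finsupp.notMem_support_iff.mp hL, mul_zero, zero_mul]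
    _ = ∑ K : NCPM n, ∑ L : NCPM n, x K * y L * (if HasCycle K.1 L.1 then 0 else 1) := by
        apply Finset.sum_subset (Finset.subset_univ _)
        intro K _ hK
        apply Finset.sum_eq_zero
        intro L _
        rw [Finsupp.notMem_support_iff.mp hK, zero_mul, zero_mul]

theorem sum_univ_ncpm (M : NCPM n) (f : Finset (Fin n × Fin n) → R) :
    (∑ K : NCPM n, (if K.1 ⊆ M.1 then f K.1 else 0)) = ∑ A ∈ M.1.powerset, f A := by
  classical
  rw [← Finset.sum_filter]
  apply Finset.sum_bij (i := fun K _ => K.1)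
  · intro K hK
    exact Finset.mem_powerset.mpr (Finset.mem_filter.mp hK).2
  · intro K _ K' _ h
    exact Subtype.ext h
  · intro A hA
    exact ⟨⟨A, M.2.subset (Finset.mem_powerset.mp hA)⟩,
      Finset.mem_filter.mpr ⟨Finset.mem_univ _, Finset.mem_powerset.mp hA⟩, rfl⟩
  · intro K _
    rfl

theorem pairing_dotted_eq (M N : NCPM n) :
    pairing (dotted M) (dotted N) = ∑ A ∈ M.1.powerset, ∑ B ∈ N.1.powerset,
      (-1 : R) ^ (M.1.card - A.card) * (-1 : R) ^ (N.1.card - B.card) *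
        (if HasCycle A B then 0 else 1) := by
  rw [pairing_eq_sum_univ]
  rw [← sum_univ_ncpm M (fun A => ∑ B ∈ N.1.powerset,
      (-1 : R) ^ (M.1.card - A.card) * (-1 : R) ^ (N.1.card - B.card) *
        (if HasCycle A B then 0 else 1))]
  apply Finset.sum_congr rfl
  intro K _
  by_cases hK : K.1 ⊆ M.1
  · rw [if_pos hK]
    rw [← sum_univ_ncpm N (fun B =>
      (-1 : R) ^ (M.1.card - K.1.card) * (-1 : R) ^ (N.1.card - B.card) *
        (if HasCycle K.1 B then 0 else 1))]
    apply Finset.sum_congr rfl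
    intro L _
    rw [dotted_apply, dotted_apply, if_pos hK]
    by_cases hL : L.1 ⊆ N.1
    · rw [if_pos hL, if_pos hL]
    · rw [if_neg hL, if_neg hL, mul_zero, zero_mul]
  · rw [if_neg hK]
    apply Finset.sum_eq_zero
    intro L _
    rw [dotted_apply, if_neg hK, zero_mul, zero_mul]

end Reduction
section Structure
variable {n : ℕ}

theorem hasCycle_iff_atoms {M N A B : Finset (Fin n × Fin n)} (hM : Matching M)
    (hN : Matching N) (hA : A ⊆ M) (hB : B ⊆ N) :
    HasCycle A B ↔ ∃ C ∈ atoms M N, C ⊆ A ∧ partner N C ⊆ B := by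
  constructor
  · rintro ⟨A', hA'A, hA'ne, B', hB'B, hB'ne, hmm⟩
    have hbal : Bal N A' := ⟨B', hB'B.trans hB, hmm⟩
    obtain ⟨C, hC, hCA'⟩ := exists_atom_subset ((hA'A.trans hA)) hA'ne hbal
    obtain ⟨hCM, hCne, hCbal, _⟩ := mem_atoms.mp hC
    refine ⟨C, hC, hCA'.trans hA'A, ?_⟩
    have h1 : matchedSet (partner N C) ⊆ matchedSet B' := by
      rw [matchedSet_partner hN hCbal, ← hmm]
      exact matchedSet_mono hCA'
    exact (hN.subset_of_matchedSet_subset (partner_subset N C) (hB'B.trans hB) h1).trans hB'B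
  · rintro ⟨C, hC, hCA, hpB⟩
    obtain ⟨hCM, hCne, hCbal, _⟩ := mem_atoms.mp hC
    refine ⟨C, hCA, hCne, partner N C, hpB, ?_, (matchedSet_partner hN hCbal).symm⟩
    rw [Finset.nonempty_iff_ne_empty]
    intro h
    have : matchedSet C = ∅ := by
      rw [← matchedSet_partner hN hCbal, h, matchedSet_empty]
    exact Finset.nonempty_iff_ne_empty.mp (matchedSet_nonempty hCne) this

theorem matchedSet_sup {ι : Type*} [DecidableEq ι] (T : Finset ι)
    (f : ι → Finset (Fin n × Fin n)) :
    matchedSet (T.sup f) = T.sup fun C => matchedSet (f C) := by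
  ext v
  simp only [mem_matchedSet, Finset.mem_sup]
  aesop

theorem sup_atoms_eq {M N : Finset (Fin n × Fin n)} (hM : Matching M) (hN : Matching N)
    (hMN : matchedSet M = matchedSet N) : (atoms M N).sup id = M := by
  apply le_antisymm
  · exact Finset.sup_le fun C hC => (mem_atoms.mp hC).1
  · intro p hp
    obtain ⟨C, hC, _, hpC⟩ := exists_atom_mem hM hN (le_refl M) ⟨N, le_refl N, hMN⟩ hp
    exact Finset.mem_sup.mpr ⟨C, hC, hpC⟩

theorem sup_atoms_partner_eq {M N : Finset (Fin n × Fin n)} (hM : Matching M)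
    (hN : Matching N) (hMN : matchedSet M = matchedSet N) :
    (atoms M N).sup (partner N) = N := by
  apply hN.eq_of_matchedSet_eq (Finset.sup_le fun C _ => partner_subset N C) (le_refl N)
  rw [matchedSet_sup]
  have h1 : ((atoms M N).sup fun C => matchedSet (partner N C))
      = (atoms M N).sup fun C => matchedSet C :=
    Finset.sup_congr rfl fun C hC => matchedSet_partner hN (mem_atoms.mp hC).2.2.1
  rw [h1, ← matchedSet_sup]
  show matchedSet ((atoms M N).sup id) = matchedSet N
  rw [sup_atoms_eq hM hN hMN, hMN]

theorem sup_eq_unique {M N : Finset (Fin n × Fin n)} (hM : Matching M) (hN : Matching N)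
    {T : Finset (Finset (Fin n × Fin n))} (hT : T ⊆ atoms M N) (hsup : T.sup id = M) :
    T = atoms M N := by
  apply le_antisymm hT
  intro C hC
  obtain ⟨hCM, hCne, _, _⟩ := mem_atoms.mp hC
  obtain ⟨p, hp⟩ := hCne
  have hpM : p ∈ M := hCM hp
  rw [← hsup] at hpM
  obtain ⟨C', hC'T, hpC'⟩ := Finset.mem_sup.mp hpM
  have : C = C' := atoms_disjoint hM hN hC (hT hC'T)
    (Finset.not_disjoint_iff.mpr ⟨p, hp, hpC'⟩)
  exact this ▸ hC'T

end Structure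
section Main
variable {n : ℕ}

theorem ite_inst {α : Sort*} {P Q : Prop} (h : P ↔ Q) (i1 : Decidable P) (i2 : Decidable Q)
    (a b : α) : @ite α P i1 a b = @ite α Q i2 a b := by
  obtain rfl : P = Q := propext h
  obtain rfl : i1 = i2 := Subsingleton.elim i1 i2
  rfl

theorem pairing_formula (M N : NCPM n) :
    pairing (dotted M) (dotted N) = ∑ T ∈ (atoms M.1 N.1).powerset,
      (-1 : R) ^ T.card * ((if T.sup id = M.1 then 1 else 0) *
        (if T.sup (partner N.1) = N.1 then (1 : R) else 0)) := by
  have hM := M.2.matching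
  have hN := N.2.matching
  rw [pairing_dotted_eq]
  have hchi : ∀ A ∈ M.1.powerset, ∀ B ∈ N.1.powerset,
      (if HasCycle A B then (0 : R) else 1)
        = ∑ T ∈ (atoms M.1 N.1).powerset, (-1 : R) ^ T.card *
            (if ∀ C ∈ T, C ⊆ A ∧ partner N.1 C ⊆ B then 1 else 0) := by
    intro A hA B hB
    have e := incl_excl (atoms M.1 N.1) (fun C => C ⊆ A ∧ partner N.1 C ⊆ B)
    have hiff : (∀ C ∈ atoms M.1 N.1, ¬(C ⊆ A ∧ partner N.1 C ⊆ B)) ↔ ¬HasCycle A B := by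
      rw [hasCycle_iff_atoms hM hN (Finset.mem_powerset.mp hA) (Finset.mem_powerset.mp hB)]
      push_neg
      rfl
    have e2 : (if HasCycle A B then (0 : R) else 1)
        = (if ∀ C ∈ atoms M.1 N.1, ¬(C ⊆ A ∧ partner N.1 C ⊆ B) then 1 else 0) := by
      simp only [hiff]
      by_cases h : HasCycle A B <;> simp [h]
    rw [e2]
    refine Eq.trans (Eq.trans (ite_inst Iff.rfl _ _ _ _) e.symm)
      (Finset.sum_congr rfl fun T _ => congrArg (fun z => (-1 : R) ^ T.card * z)
        (ite_inst Iff.rfl _ _ _ _))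
  calc ∑ A ∈ M.1.powerset, ∑ B ∈ N.1.powerset,
        (-1 : R) ^ (M.1.card - A.card) * (-1 : R) ^ (N.1.card - B.card) *
          (if HasCycle A B then 0 else 1)
      = ∑ A ∈ M.1.powerset, ∑ B ∈ N.1.powerset, ∑ T ∈ (atoms M.1 N.1).powerset,
          (-1 : R) ^ (M.1.card - A.card) * (-1 : R) ^ (N.1.card - B.card) *
            ((-1 : R) ^ T.card *
              (if ∀ C ∈ T, C ⊆ A ∧ partner N.1 C ⊆ B then 1 else 0)) := by
        apply Finset.sum_congr rfl
        intro A hA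
        apply Finset.sum_congr rfl
        intro B hB
        rw [hchi A hA B hB, Finset.mul_sum]
    _ = ∑ A ∈ M.1.powerset, ∑ T ∈ (atoms M.1 N.1).powerset, ∑ B ∈ N.1.powerset,
          (-1 : R) ^ (M.1.card - A.card) * (-1 : R) ^ (N.1.card - B.card) *
            ((-1 : R) ^ T.card *
              (if ∀ C ∈ T, C ⊆ A ∧ partner N.1 C ⊆ B then 1 else 0)) :=
        Finset.sum_congr rfl fun A _ => Finset.sum_comm
    _ = ∑ T ∈ (atoms M.1 N.1).powerset, ∑ A ∈ M.1.powerset, ∑ B ∈ N.1.powerset,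
          (-1 : R) ^ (M.1.card - A.card) * (-1 : R) ^ (N.1.card - B.card) *
            ((-1 : R) ^ T.card *
              (if ∀ C ∈ T, C ⊆ A ∧ partner N.1 C ⊆ B then 1 else 0)) :=
        Finset.sum_comm
    _ = ∑ T ∈ (atoms M.1 N.1).powerset,
          (-1 : R) ^ T.card * ((if T.sup id = M.1 then 1 else 0) *
            (if T.sup (partner N.1) = N.1 then (1 : R) else 0)) := by
        apply Finset.sum_congr rfl
        intro T hT
        have hTsub : T ⊆ atoms M.1 N.1 := Finset.mem_powerset.mp hT
        have hLM : T.sup id ⊆ M.1 :=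
          Finset.sup_le fun C hC => (mem_atoms.mp (hTsub hC)).1
        have hLN : T.sup (partner N.1) ⊆ N.1 :=
          Finset.sup_le fun C _ => partner_subset N.1 C
        have hind : ∀ A B : Finset (Fin n × Fin n),
            (if ∀ C ∈ T, C ⊆ A ∧ partner N.1 C ⊆ B then (1 : R) else 0)
              = (if T.sup id ⊆ A then 1 else 0) * (if T.sup (partner N.1) ⊆ B then 1 else 0) := by
          intro A B
          have h1 : (∀ C ∈ T, C ⊆ A ∧ partner N.1 C ⊆ B)
              ↔ (T.sup id ⊆ A ∧ T.sup (partner N.1) ⊆ B) := by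
            constructor
            · intro h
              exact ⟨Finset.sup_le fun C hC => (h C hC).1,
                Finset.sup_le fun C hC => (h C hC).2⟩
            · rintro ⟨h1, h2⟩ C hC
              exact ⟨le_trans (Finset.le_sup (f := id) hC) h1,
                le_trans (Finset.le_sup (f := partner N.1) hC) h2⟩
          simp only [h1]
          by_cases hp : T.sup id ⊆ A <;> by_cases hq : T.sup (partner N.1) ⊆ B <;>
            simp [hp, hq]
        calc ∑ A ∈ M.1.powerset, ∑ B ∈ N.1.powerset,
              (-1 : R) ^ (M.1.card - A.card) * (-1 : R) ^ (N.1.card - B.card) *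
                ((-1 : R) ^ T.card *
                  (if ∀ C ∈ T, C ⊆ A ∧ partner N.1 C ⊆ B then 1 else 0))
            = (-1 : R) ^ T.card *
                ((∑ A ∈ M.1.powerset,
                    (-1 : R) ^ (M.1.card - A.card) * (if T.sup id ⊆ A then 1 else 0)) *
                  (∑ B ∈ N.1.powerset,
                    (-1 : R) ^ (N.1.card - B.card) *
                      (if T.sup (partner N.1) ⊆ B then 1 else 0))) := by
              rw [Finset.sum_mul_sum, Finset.mul_sum]
              apply Finset.sum_congr rfl
              intro A _
              rw [Finset.mul_sum]
              apply Finset.sum_congr rfl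
              intro B _
              rw [hind A B]
              ring
          _ = (-1 : R) ^ T.card * ((if T.sup id = M.1 then 1 else 0) *
                (if T.sup (partner N.1) = N.1 then (1 : R) else 0)) := by
              rw [sum_sandwich hLM, sum_sandwich hLN]

end Main
/-- If the matched sets of `M` and `N` differ then `⟨v_M, v_N⟩ = 0`;
if `M` and `N` have the same matched set then `⟨v_M, v_N⟩ = (−1)^{c(M,N)}`
(in particular it is `±1`). -/
theorem pairing_dotted_dotted (n : ℕ) (M N : NCPM n) :
    (matchedSet M.1 ≠ matchedSet N.1 → pairing (dotted M) (dotted N) = 0) ∧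
      (matchedSet M.1 = matchedSet N.1 →
        pairing (dotted M) (dotted N) = (-1 : R) ^ cyclesCount M.1 N.1) := by
  have hM := M.2.matching
  have hN := N.2.matching
  constructor
  · intro hne
    rw [pairing_formula]
    apply Finset.sum_eq_zero
    intro T hT
    by_cases h1 : T.sup id = M.1
    · by_cases h2 : T.sup (partner N.1) = N.1
      · exfalso
        apply hne
        have e1 : matchedSet M.1 = T.sup fun C => matchedSet (id C) :=
          (congrArg matchedSet h1).symm.trans (matchedSet_sup T id)
        have e2 : matchedSet N.1 = T.sup fun C => matchedSet (partner N.1 C) :=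
          (congrArg matchedSet h2).symm.trans (matchedSet_sup T (partner N.1))
        rw [e1, e2]
        exact (Finset.sup_congr rfl fun C hC =>
          (matchedSet_partner hN (mem_atoms.mp (Finset.mem_powerset.mp hT hC)).2.2.1)).symm
      · simp [h2]
    · simp [h1]
  · intro heq
    rw [pairing_formula, cyclesCount_eq_card_atoms]
    rw [Finset.sum_eq_single_of_mem (atoms M.1 N.1)
      (Finset.mem_powerset.mpr (le_refl _))]
    · rw [if_pos (sup_atoms_eq hM hN heq), if_pos (sup_atoms_partner_eq hM hN heq),
        one_mul, mul_one]
    · intro T hT hTne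
      have h1 : ¬T.sup id = M.1 := fun h =>
        hTne (sup_eq_unique hM hN (Finset.mem_powerset.mp hT) h)
      simp [h1]
end

section
/- In P_4 there holds the Alexander–Conway skein relation X₊ − X₋ = (q − q⁻¹)·e_{{1,4},{2,3}}, where e_{{1,4},{2,3}} is the basis diagram of two parallel strands joining point 1 to point 4 and point 2 to point 3. (This is the paper's lemma that its expansion of crossings in the planar algebra P satisfies the Alexander–Conway skein relation.) -/
open Finset LaurentPolynomial

/-- The positive crossing `X₊ ∈ P₄` (points `0,1,2,3` in circular order: `0` = bottom-left,
`1` = bottom-right, `2` = top-right, `3` = top-left):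
`X₊ = q·v_{{04},{12}} + (q−q⁻¹)·v_{{03}} + q·v_{{13}} + q⁻¹·v_{{02}} − q⁻¹·v_∅`
(in the paper's 1-indexed notation
`X₊ = q·v_{{1,4},{2,3}} + (q−q⁻¹)·v_{{1,4}} + q·v_{{2,4}} + q⁻¹·v_{{1,3}} − q⁻¹·v_∅`). -/
noncomputable def Xpos : Pn 4 :=
  (T 1 : R) • dotted ⟨{(0, 3), (1, 2)}, by decide⟩ +
    ((T 1 - T (-1) : R)) • dotted ⟨{(0, 3)}, by decide⟩ +
    (T 1 : R) • dotted ⟨{(1, 3)}, by decide⟩ +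
    (T (-1) : R) • dotted ⟨{(0, 2)}, by decide⟩ -
    (T (-1) : R) • dotted ⟨(∅ : Finset (Fin 4 × Fin 4)), by decide⟩

/-- The negative crossing
`X₋ = q⁻¹·v_{{1,4},{2,3}} + (q⁻¹−q)·v_{{2,3}} + q⁻¹·v_{{1,3}} + q·v_{{2,4}} − q·v_∅`
(paper's 1-indexed notation), written with 0-indexed points. -/
noncomputable def Xneg : Pn 4 :=
  (T (-1) : R) • dotted ⟨{(0, 3), (1, 2)}, by decide⟩ +
    ((T (-1) - T 1 : R)) • dotted ⟨{(1, 2)}, by decide⟩ +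
    (T (-1) : R) • dotted ⟨{(0, 2)}, by decide⟩ +
    (T 1 : R) • dotted ⟨{(1, 3)}, by decide⟩ -
    (T 1 : R) • dotted ⟨(∅ : Finset (Fin 4 × Fin 4)), by decide⟩

lemma dotted_eq {n : ℕ} (M : NCPM n) :
    dotted M = ∑ A ∈ M.1.powerset,
      if h : IsNCPM n A then ((-1 : R) ^ (M.1.card - A.card)) • e ⟨A, h⟩ else 0 := by
  rw [dotted, ← Finset.sum_attach M.1.powerset
    (fun A => if h : IsNCPM n A then ((-1 : R) ^ (M.1.card - A.card)) • e ⟨A, h⟩ else 0)]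
  refine Finset.sum_congr rfl fun A _ => ?_
  rw [dif_pos (M.2.subset (Finset.mem_powerset.mp A.2))]

lemma d_empty : dotted ⟨(∅ : Finset (Fin 4 × Fin 4)), by decide⟩ = e ⟨∅, by decide⟩ := by
  rw [dotted_eq]
  simp only [Finset.powerset_empty, Finset.sum_singleton]
  rw [dif_pos (by decide)]; norm_num

lemma d_single (p : Fin 4 × Fin 4) (h : IsNCPM 4 {p}) :
    dotted ⟨({p} : Finset (Fin 4 × Fin 4)), h⟩
      = e ⟨{p}, h⟩ - e ⟨∅, by decide⟩ := by
  rw [dotted_eq]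
  rw [show ({p} : Finset (Fin 4 × Fin 4)).powerset = {∅, {p}} from by
    ext A; simp [Finset.subset_singleton_iff]]
  rw [Finset.sum_insert (by simp [Ne.symm (Finset.singleton_ne_empty p)]), Finset.sum_singleton]
  rw [dif_pos (by decide), dif_pos h]
  norm_num
  abel

lemma d_full : dotted ⟨({(0, 3), (1, 2)} : Finset (Fin 4 × Fin 4)), by decide⟩
    = e ⟨{(0, 3), (1, 2)}, by decide⟩ - e ⟨{(0, 3)}, by decide⟩ - e ⟨{(1, 2)}, by decide⟩
      + e ⟨∅, by decide⟩ := by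
  rw [dotted_eq]
  rw [show ({(0, 3), (1, 2)} : Finset (Fin 4 × Fin 4)).powerset
      = {∅, {(0, 3)}, {(1, 2)}, {(0, 3), (1, 2)}} from by decide]
  rw [Finset.sum_insert (by decide), Finset.sum_insert (by decide),
    Finset.sum_insert (by decide), Finset.sum_singleton]
  rw [dif_pos (by decide), dif_pos (by decide), dif_pos (by decide), dif_pos (by decide)]
  norm_num
  abel

/-- The Alexander–Conway skein relation holds in `P₄`:
`X₊ − X₋ = (q − q⁻¹)·e_{{1,4},{2,3}}` (0-indexed: `e_{{03},{12}}`, the diagram of two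
parallel strands joining point 1 to point 4 and point 2 to point 3). -/
theorem skein_relation :
    Xpos - Xneg
      = (T 1 - T (-1) : R) • e (⟨{(0, 3), (1, 2)}, by decide⟩ : NCPM 4) := by
  rw [Xpos, Xneg, d_full, d_empty, d_single _ (by decide), d_single _ (by decide),
    d_single _ (by decide), d_single _ (by decide)]
  module
end
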